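/- Let α ≥ 3 be an integer and β ≥ 0 a real number, and set ŝ(α,β) = ⌊√((2β + α + 1)/(4α))⌋. Then for every natural number s, h(α,β,ŝ(α,β)) ≤ h(α,β,s); that is, ŝ(α,β) minimizes h(α,β,·) over the natural numbers, so t_S(α,β) = min_{s∈ℕ} h(α,β,s). -/
import Mathlib


/-- `ŝ(α,β) = ⌊√((2β + α + 1)/(4α))⌋`. -/
noncomputable def sHat (α : ℤ) (β : ℝ) : ℤ :=
  ⌊Real.sqrt ((2 * β + (α : ℝ) + 1) / (4 * (α : ℝ)))⌋

/-- `t_S(α,β) = 1 + α·ŝ(α,β) + (β + 1/2)/(2ŝ(α,β) + 1) - 1/2`, the continuous variant of the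
PSD-throttling number of the balanced spider `T_{α,β}`. -/
noncomputable def tS (α : ℤ) (β : ℝ) : ℝ :=
  1 + (α : ℝ) * (sHat α β : ℝ) + (β + 1 / 2) / (2 * (sHat α β : ℝ) + 1) - 1 / 2

/-- `t_P(α,β) = √(2(αβ + 1) + 1/4) - 1/2`, the continuous variant of the PSD-throttling
number of the path on `αβ + 1` vertices. -/
noncomputable def tP (α : ℤ) (β : ℝ) : ℝ :=
  Real.sqrt (2 * ((α : ℝ) * β + 1) + 1 / 4) - 1 / 2

/-- `h(α,β,s) = 1 + αs + (β - s)/(2s + 1)`. -/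
noncomputable def hF (α β s : ℝ) : ℝ := 1 + α * s + (β - s) / (2 * s + 1)

lemma hF_diff (α β s : ℝ) (hs : 0 ≤ s) :
    hF α β (s + 1) - hF α β s
      = (4 * α * (s + 1) ^ 2 - (2 * β + α + 1)) / ((2 * s + 1) * (2 * s + 3)) := by
  have h1 : (2 * s + 1) ≠ 0 := by positivity
  have h3 : (2 * s + 3) ≠ 0 := by positivity
  unfold hF
  have h2 : (2 * (s + 1) + 1) = 2 * s + 3 := by ring
  rw [h2]
  field_simp
  ring

lemma hF_step_up (α β s : ℝ) (hs : 0 ≤ s) (h : 2 * β + α + 1 ≤ 4 * α * (s + 1) ^ 2) :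
    hF α β s ≤ hF α β (s + 1) := by
  have hd := hF_diff α β s hs
  have : 0 ≤ (4 * α * (s + 1) ^ 2 - (2 * β + α + 1)) / ((2 * s + 1) * (2 * s + 3)) := by
    apply div_nonneg (by linarith) (by positivity)
  linarith

lemma hF_step_down (α β s : ℝ) (hs : 0 ≤ s) (h : 4 * α * (s + 1) ^ 2 ≤ 2 * β + α + 1) :
    hF α β (s + 1) ≤ hF α β s := by
  have hd := hF_diff α β s hs
  have : (4 * α * (s + 1) ^ 2 - (2 * β + α + 1)) / ((2 * s + 1) * (2 * s + 3)) ≤ 0 := by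
    apply div_nonpos_of_nonpos_of_nonneg (by linarith) (by positivity)
  linarith

/-- For an integer `α ≥ 3` and real `β ≥ 0`, `ŝ(α,β)` minimizes `h(α,β,·)` over ℕ, so
`t_S(α,β) = min_{s ∈ ℕ} h(α,β,s)`. -/
theorem stmt10 (α : ℤ) (hα : 3 ≤ α) (β : ℝ) (hβ : 0 ≤ β) :
    (∀ s : ℕ, hF (α : ℝ) β ((sHat α β : ℤ) : ℝ) ≤ hF (α : ℝ) β (s : ℝ)) ∧
    IsLeast {y : ℝ | ∃ s : ℕ, y = hF (α : ℝ) β (s : ℝ)} (tS α β) := by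
  set A : ℝ := (α : ℝ) with hA
  have hA3 : (3 : ℝ) ≤ A := by rw [hA]; exact_mod_cast hα
  have hApos : 0 < A := by linarith
  set q : ℝ := (2 * β + A + 1) / (4 * A) with hq
  have hqnn : 0 ≤ q := by positivity
  have hsq : Real.sqrt q ^ 2 = q := Real.sq_sqrt hqnn
  set N : ℤ := sHat α β with hN
  have hN0 : 0 ≤ N := Int.floor_nonneg.mpr (Real.sqrt_nonneg _)
  have hNle : (N : ℝ) ≤ Real.sqrt q := Int.floor_le _
  have hNlt : Real.sqrt q < (N : ℝ) + 1 := Int.lt_floor_add_one _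
  set n : ℕ := N.toNat with hn
  have hnR : ((n : ℕ) : ℝ) = (N : ℝ) := by
    rw [hn]
    exact_mod_cast congrArg (fun z : ℤ => (z : ℝ)) (Int.toNat_of_nonneg hN0)
  -- main forall part
  have main : ∀ s : ℕ, hF A β ((N : ℤ) : ℝ) ≤ hF A β (s : ℝ) := by
    intro s
    rcases le_or_gt n s with hle | hlt
    · -- increasing side: induction from n up to s
      induction s, hle using Nat.le_induction with
      | base => rw [hnR]
      | succ t ht ih =>
        have hstep : hF A β (t : ℝ) ≤ hF A β ((t : ℝ) + 1) := by
          apply hF_step_up A β _ (by positivity)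
          have h1 : Real.sqrt q < (t : ℝ) + 1 := by
            have : (N : ℝ) ≤ (t : ℝ) := by rw [← hnR]; exact_mod_cast ht
            linarith
          have h2 : q ≤ ((t : ℝ) + 1) ^ 2 := by
            nlinarith [Real.sqrt_nonneg q]
          rw [hq, div_le_iff₀ (by positivity)] at h2
          nlinarith
        have hcast : ((t : ℝ) + 1) = ((t + 1 : ℕ) : ℝ) := by push_cast; ring
        rw [← hcast]
        linarith
    · -- decreasing side
      have key : ∀ u : ℕ, s ≤ u → u ≤ n → hF A β (u : ℝ) ≤ hF A β (s : ℝ) := by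
        intro u hsu
        induction u, hsu using Nat.le_induction with
        | base => intro _; exact le_refl _
        | succ t ht ih =>
          intro htn
          have h1 : t ≤ n := by omega
          have hstep : hF A β ((t : ℝ) + 1) ≤ hF A β (t : ℝ) := by
            apply hF_step_down A β _ (by positivity)
            have h2 : (t : ℝ) + 1 ≤ Real.sqrt q := by
              have : ((t + 1 : ℕ) : ℝ) ≤ (N : ℝ) := by
                rw [← hnR]; exact_mod_cast (by omega : (t + 1 : ℕ) ≤ n)
              push_cast at this
              linarith
            have h3 : ((t : ℝ) + 1) ^ 2 ≤ q := by
              nlinarith [Real.sqrt_nonneg q]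
            rw [hq, le_div_iff₀ (by positivity)] at h3
            nlinarith
          have hcast : ((t : ℝ) + 1) = ((t + 1 : ℕ) : ℝ) := by push_cast; ring
          rw [← hcast]
          exact le_trans hstep (ih h1)
      have := key n hlt.le le_rfl
      rw [hnR] at this
      exact this
  have heq : tS α β = hF A β ((N : ℤ) : ℝ) := by
    have hden : 2 * ((N : ℤ) : ℝ) + 1 ≠ 0 := by
      have h0 : (0 : ℝ) ≤ (N : ℝ) := by exact_mod_cast hN0
      positivity
    unfold tS hF
    rw [← hN, ← hA]
    field_simp
    ring
  refine ⟨main, ⟨⟨n, ?_⟩, ?_⟩⟩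
  · rw [heq, hnR]
  · rintro y ⟨s, rfl⟩
    rw [heq]
    exact main s
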